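/- Finite-rank shift-invariant kernels are trigonometric: Suppose κ : ℤ → ℝ is bounded and there exist functions φ, ψ : ℤ → ℝ^{d_p} with κ(i - j) = ⟨φ(i), ψ(j)⟩ for all i, j ∈ ℤ. Then there exist M ≤ d_p, angles θ_1,…,θ_M ∈ [0, 2π), and complex coefficients c_1,…,c_M such that κ(d) = ∑_{m=1}^M c_m e^{i θ_m d} for all d ∈ ℤ. -/

import Mathlib

/-!
The translates `d ↦ κ (d + n)` of `κ` lie in the span of the `d_p` columns `d ↦ φ d l`, so they
span a finite-dimensional shift-invariant space `V` of bounded sequences. Over `ℂ`, `V` is the sum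
of the generalized eigenspaces of the shift. A bounded eigensequence `μ ^ d * a` forces `‖μ‖ = 1`,
and no bounded sequence lies in a Jordan block of size two, since such a sequence grows like
`n * μ ^ n`. So `κ` is a sum of eigensequences `c μ * μ ^ d` with `μ = exp (i θ)`; eigensequences
for distinct `μ` are linearly independent, so at most `dim V ≤ d_p` of them occur.
-/

open Real Finset
open scoped ENNReal

namespace Module.End

variable {R M : Type*} [CommRing R] [AddCommGroup M] [Module R M]

lemma apply_eq_zero_of_pow_apply_eq_zero {g : End R M} (h : ∀ x, g (g x) = 0 → g x = 0) :
    ∀ {k : ℕ} {x : M}, (g ^ k) x = 0 → g x = 0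
  | 0, x, hx => by rw [pow_zero, one_apply] at hx; rw [hx, map_zero]
  | k + 1, x, hx => h x <| apply_eq_zero_of_pow_apply_eq_zero h (k := k) <| by
      rwa [pow_succ, mul_apply] at hx

lemma maxGenEigenspace_eq_eigenspace_of_sq {f : End R M} {μ : R}
    (h : ∀ x, (f - μ • 1) ((f - μ • 1) x) = 0 → (f - μ • 1) x = 0) :
    f.maxGenEigenspace μ = f.eigenspace μ := by
  refine le_antisymm (fun x hx => ?_) eigenspace_le_maxGenEigenspace
  obtain ⟨k, hk⟩ := (mem_maxGenEigenspace f μ x).1 hx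
  simpa [mem_eigenspace_iff, sub_eq_zero] using apply_eq_zero_of_pow_apply_eq_zero h hk

variable {K V : Type*} [Field K] [IsAlgClosed K] [AddCommGroup V] [Module K V]
  [FiniteDimensional K V]

lemma exists_eq_sum_eigenvectors {f : End K V}
    (hf : ∀ μ, f.maxGenEigenspace μ = f.eigenspace μ) (v : V) :
    ∃ (s : Finset K) (w : K → V), #s ≤ Module.finrank K V ∧
      (∀ μ ∈ s, f.HasEigenvector μ (w μ)) ∧ v = ∑ μ ∈ s, w μ := by
  have hv : v ∈ ⨆ μ, f.eigenspace μ := by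
    simp only [← hf, iSup_maxGenEigenspace_eq_top, Submodule.mem_top]
  obtain ⟨w, hw, rfl⟩ := (Submodule.mem_iSup_iff_exists_finsupp _ _).1 hv
  have heig : ∀ μ ∈ w.support, f.HasEigenvector μ (w μ) :=
    fun μ hμ => ⟨hw μ, Finsupp.mem_support_iff.1 hμ⟩
  refine ⟨w.support, w, ?_, heig, rfl⟩
  simpa using (eigenvectors_linearIndependent' f (fun μ : w.support => (μ : K))
    Subtype.coe_injective _ fun μ => heig μ μ.2).fintype_card_le_finrank

end Module.End

lemma le_one_of_forall_pow_le {r C : ℝ} (h : ∀ n : ℕ, r ^ n ≤ C) : r ≤ 1 := by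
  by_contra! hr
  obtain ⟨n, hn⟩ := pow_unbounded_of_one_lt C hr
  exact (h n).not_gt hn

lemma Complex.zpow_eq_exp_toIcoMod_arg {μ : ℂ} (hμ : ‖μ‖ = 1) (d : ℤ) :
    μ ^ d = exp (I * toIcoMod two_pi_pos 0 (arg μ) * d) := by
  set θ := toIcoMod two_pi_pos 0 (arg μ)
  have hexp : exp (θ * I) = μ := by
    rw [← sub_sub_cancel (arg μ) θ, self_sub_toIcoMod]
    push_cast
    rw [exp_mul_I_periodic.sub_zsmul_eq]
    simpa [hμ] using norm_mul_exp_arg_mul_I μ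
  calc μ ^ d = exp (θ * I) ^ d := by rw [hexp]
    _ = _ := by rw [← exp_int_mul]; ring_nf

namespace IntSeq

variable {𝕜 : Type*}

def shift [CommSemiring 𝕜] : (ℤ → 𝕜) →ₗ[𝕜] ℤ → 𝕜 :=
  LinearMap.funLeft 𝕜 𝕜 (· + 1)

@[simp] lemma shift_apply [CommSemiring 𝕜] (f : ℤ → 𝕜) (d : ℤ) : shift f d = f (d + 1) :=
  rfl

def translates [CommSemiring 𝕜] (f : ℤ → 𝕜) : Submodule 𝕜 (ℤ → 𝕜) :=
  Submodule.span 𝕜 (Set.range fun n d => f (d + n))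

section Field

variable [Field 𝕜] {f g : ℤ → 𝕜} {μ : 𝕜}

lemma self_mem_translates (f : ℤ → 𝕜) : f ∈ translates f :=
  Submodule.subset_span ⟨0, funext fun d => by simp⟩

lemma shift_mem_translates (hg : g ∈ translates f) : shift g ∈ translates f := by
  refine (Submodule.map_span_le shift _ _).2 ?_ (Submodule.mem_map_of_mem hg)
  rintro _ ⟨n, rfl⟩
  exact Submodule.subset_span ⟨n + 1, funext fun d => by simp [add_assoc, add_comm 1 n]⟩

section Factorization

variable {ι : Type*} [Fintype ι] (φ ψ : ℤ → ι → 𝕜)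

lemma translates_le_span_of_eq_sum_mul (h : ∀ i j, f (i - j) = ∑ l, φ i l * ψ j l) :
    translates f ≤ Submodule.span 𝕜 (Set.range fun l d => φ d l) := by
  refine Submodule.span_le.2 ?_
  rintro _ ⟨n, rfl⟩
  show (fun d => f (d + n)) ∈ _
  have hcol : (fun d => f (d + n)) = ∑ l, ψ (-n) l • fun d => φ d l := by
    ext d
    simp [← h, mul_comm]
  rw [hcol]
  exact Submodule.sum_mem _ fun l _ => Submodule.smul_mem _ _ (Submodule.subset_span ⟨l, rfl⟩)

lemma finiteDimensional_translates_of_eq_sum_mul (h : ∀ i j, f (i - j) = ∑ l, φ i l * ψ j l) :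
    FiniteDimensional 𝕜 (translates f) :=
  have := FiniteDimensional.span_of_finite 𝕜 (Set.finite_range fun l d => φ d l)
  Submodule.finiteDimensional_of_le (translates_le_span_of_eq_sum_mul φ ψ h)

lemma finrank_translates_le_of_eq_sum_mul (h : ∀ i j, f (i - j) = ∑ l, φ i l * ψ j l) :
    Module.finrank 𝕜 (translates f) ≤ Fintype.card ι :=
  have := FiniteDimensional.span_of_finite 𝕜 (Set.finite_range fun l d => φ d l)
  (Submodule.finrank_mono (translates_le_span_of_eq_sum_mul φ ψ h)).trans
    (finrank_range_le_card _)

end Factorization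

lemma ne_zero_of_shift_eq_smul (hf : shift f = μ • f) (hf0 : f ≠ 0) : μ ≠ 0 := by
  rintro rfl
  exact hf0 (funext fun d => by simpa using congrFun hf (d - 1))

lemma eq_zpow_mul_of_shift_eq_smul (hf : shift f = μ • f) (hμ : μ ≠ 0) (d : ℤ) :
    f d = μ ^ d * f 0 := by
  have step (d : ℤ) : f (d + 1) = μ * f d := congrFun hf d
  induction d using Int.induction_on with
  | zero => simp
  | succ k ih => rw [step, ih, zpow_add_one₀ hμ]; ring
  | pred k ih =>
    have := step (-k - 1)
    rw [sub_add_cancel, ih] at this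
    rw [zpow_sub_one₀ hμ, mul_right_comm, this, mul_comm μ, mul_inv_cancel_right₀ hμ]

end Field

section NormedField

variable [NormedField 𝕜] {f g : ℤ → 𝕜} {μ : 𝕜}

lemma memℓp_infty_comp_add_right (hf : Memℓp f ∞) (n : ℤ) :
    Memℓp (fun d => f (d + n)) ∞ :=
  memℓp_infty <| hf.bddAbove.mono <| Set.range_comp_subset_range (· + n) fun d => ‖f d‖

lemma memℓp_infty_of_mem_translates (hf : Memℓp f ∞) (hg : g ∈ translates f) :
    Memℓp g ∞ := by
  induction hg using Submodule.span_induction with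
  | mem _ h => obtain ⟨n, rfl⟩ := h; exact memℓp_infty_comp_add_right hf n
  | zero => exact zero_memℓp
  | add _ _ _ _ h₁ h₂ => exact h₁.add h₂
  | smul c _ _ h => exact h.const_smul c

lemma norm_eq_one_of_shift_eq_smul (hb : Memℓp f ∞) (hf : shift f = μ • f) (hf0 : f ≠ 0) :
    ‖μ‖ = 1 := by
  have hμ := ne_zero_of_shift_eq_smul hf hf0
  have hf00 : f 0 ≠ 0 := fun h => hf0 <| funext fun d => by
    rw [eq_zpow_mul_of_shift_eq_smul hf hμ d, h, mul_zero, Pi.zero_apply]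
  obtain ⟨C, hC⟩ := hb.bddAbove
  have bound (d : ℤ) : ‖μ‖ ^ d ≤ C / ‖f 0‖ := by
    rw [le_div_iff₀ (norm_pos_iff.2 hf00), ← norm_zpow, ← norm_mul,
      ← eq_zpow_mul_of_shift_eq_smul hf hμ d]
    exact hC ⟨d, rfl⟩
  refine le_antisymm ?_ ((inv_le_one₀ (norm_pos_iff.2 hμ)).1 ?_)
  · exact le_one_of_forall_pow_le fun n => by exact_mod_cast bound n
  · exact le_one_of_forall_pow_le fun n => by
      simpa [inv_pow, ← zpow_natCast, ← zpow_neg] using bound (-n)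

end NormedField

section RCLike

variable [RCLike 𝕜] {μ : 𝕜}

lemma eq_zero_of_add_one_eq_mul_add_pow_mul {x : ℕ → 𝕜} {b : 𝕜} {C : ℝ}
    (hx : ∀ n, ‖x n‖ ≤ C) (hμ : ‖μ‖ = 1) (h : ∀ n, x (n + 1) = μ * x n + μ ^ n * b) :
    b = 0 := by
  have closed (n : ℕ) : μ * x n = μ ^ (n + 1) * x 0 + n * μ ^ n * b := by
    induction n with
    | zero => simp
    | succ n ih => rw [h, mul_add, ih]; push_cast; ring
  have bound (n : ℕ) : n * ‖b‖ ≤ C + ‖x 0‖ := calc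
    n * ‖b‖ = ‖μ * x n - μ ^ (n + 1) * x 0‖ := by
      rw [closed, add_sub_cancel_left]; simp [hμ]
    _ ≤ ‖x n‖ + ‖x 0‖ := by simpa [hμ] using norm_sub_le (μ * x n) (μ ^ (n + 1) * x 0)
    _ ≤ C + ‖x 0‖ := by gcongr; exact hx n
  by_contra hb
  obtain ⟨n, hn⟩ := exists_nat_gt ((C + ‖x 0‖) / ‖b‖)
  rw [div_lt_iff₀ (norm_pos_iff.2 hb)] at hn
  exact (bound n).not_gt hn

lemma shift_eq_smul_of_shift_sub_smul_eq_smul {x : ℤ → 𝕜} (hx : Memℓp x ∞)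
    (h : shift (shift x - μ • x) = μ • (shift x - μ • x)) : shift x = μ • x := by
  rw [← sub_eq_zero]
  set y := shift x - μ • x
  by_contra hy0
  have hμ0 := ne_zero_of_shift_eq_smul h hy0
  have hμ := norm_eq_one_of_shift_eq_smul
    ((memℓp_infty_comp_add_right hx 1).sub (hx.const_smul μ)) h hy0
  have hy := eq_zpow_mul_of_shift_eq_smul h hμ0
  obtain ⟨C, hC⟩ := hx.bddAbove
  have hy00 : y 0 = 0 := by
    refine eq_zero_of_add_one_eq_mul_add_pow_mul (x := fun n : ℕ => x n)
      (fun n => hC ⟨n, rfl⟩) hμ fun n => ?_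
    have hyn : y n = x (n + 1) - μ * x n := rfl
    rw [hy, zpow_natCast] at hyn
    push_cast
    linear_combination -hyn
  exact hy0 (funext fun d => by rw [hy d, hy00, mul_zero, Pi.zero_apply])

end RCLike

def shiftOn (f : ℤ → ℂ) : Module.End ℂ (translates f) :=
  shift.restrict fun _ => shift_mem_translates

lemma maxGenEigenspace_shiftOn_eq_eigenspace {f : ℤ → ℂ} (hf : Memℓp f ∞) (μ : ℂ) :
    (shiftOn f).maxGenEigenspace μ = (shiftOn f).eigenspace μ := by
  refine Module.End.maxGenEigenspace_eq_eigenspace_of_sq fun x hx => Subtype.ext ?_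
  have hx' : shift (shift (x : ℤ → ℂ) - μ • (x : ℤ → ℂ)) = μ • (shift (x : ℤ → ℂ) - μ • x) :=
    sub_eq_zero.1 (congrArg Subtype.val hx)
  exact sub_eq_zero.2 <|
    shift_eq_smul_of_shift_sub_smul_eq_smul (memℓp_infty_of_mem_translates hf x.2) hx'

theorem exists_eq_sum_zpow_of_memℓp_infty {κ : ℤ → ℂ} (hκ : Memℓp κ ∞)
    [FiniteDimensional ℂ (translates κ)] :
    ∃ s : Finset ℂ, #s ≤ Module.finrank ℂ (translates κ) ∧ (∀ μ ∈ s, ‖μ‖ = 1) ∧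
      ∃ c : ℂ → ℂ, ∀ d : ℤ, κ d = ∑ μ ∈ s, c μ * μ ^ d := by
  obtain ⟨s, w, hcard, hw, hsum⟩ := Module.End.exists_eq_sum_eigenvectors
    (maxGenEigenspace_shiftOn_eq_eigenspace hκ) ⟨κ, self_mem_translates κ⟩
  have heig (μ : ℂ) (hμ : μ ∈ s) : shift (w μ : ℤ → ℂ) = μ • (w μ : ℤ → ℂ) :=
    congrArg Subtype.val (Module.End.mem_eigenspace_iff.1 (hw μ hμ).1)
  have hne (μ : ℂ) (hμ : μ ∈ s) : (w μ : ℤ → ℂ) ≠ 0 := Subtype.coe_ne_coe.2 (hw μ hμ).2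
  refine ⟨s, hcard, fun μ hμ => norm_eq_one_of_shift_eq_smul
    (memℓp_infty_of_mem_translates hκ (w μ).2) (heig μ hμ) (hne μ hμ),
    fun μ => (w μ : ℤ → ℂ) 0, fun d => ?_⟩
  calc κ d = ∑ μ ∈ s, (w μ : ℤ → ℂ) d := by
        simpa using congrFun (congrArg Subtype.val hsum) d
    _ = _ := sum_congr rfl fun μ hμ => by
        rw [eq_zpow_mul_of_shift_eq_smul (heig μ hμ) (ne_zero_of_shift_eq_smul (heig μ hμ)
          (hne μ hμ)), mul_comm]

end IntSeq

/-- Finite-rank shift-invariant kernels are trigonometric: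
a bounded `κ : ℤ → ℝ` with `κ(i-j) = ⟨φ(i), ψ(j)⟩` for `φ, ψ : ℤ → ℝ^{d_p}`
is a finite sum of at most `d_p` complex exponentials with unit-modulus
frequencies. -/
theorem finite_rank_shift_invariant_kernel_trigonometric
    (dp : ℕ) (κ : ℤ → ℝ)
    (hbdd : ∃ C : ℝ, ∀ d : ℤ, |κ d| ≤ C)
    (φ ψ : ℤ → Fin dp → ℝ)
    (hfact : ∀ i j : ℤ, κ (i - j) = ∑ l, φ i l * ψ j l) :
    ∃ (M : ℕ), M ≤ dp ∧ ∃ (θ : Fin M → ℝ) (c : Fin M → ℂ),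
      (∀ m, θ m ∈ Set.Ico (0 : ℝ) (2 * π)) ∧
      ∀ d : ℤ, (κ d : ℂ) = ∑ m, c m * Complex.exp (Complex.I * (θ m) * (d : ℂ)) := by
  obtain ⟨C, hC⟩ := hbdd
  set κℂ : ℤ → ℂ := fun d => (κ d : ℂ)
  have hκ : Memℓp κℂ ∞ := memℓp_infty ⟨C, by rintro _ ⟨d, rfl⟩; simpa [κℂ] using hC d⟩
  have hfactℂ (i j : ℤ) : κℂ (i - j) = ∑ l, (φ i l : ℂ) * ψ j l := by simp [κℂ, hfact]
  have := IntSeq.finiteDimensional_translates_of_eq_sum_mul _ _ hfactℂ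
  have hrank := IntSeq.finrank_translates_le_of_eq_sum_mul _ _ hfactℂ
  obtain ⟨s, hcard, hnorm, c, hsum⟩ := IntSeq.exists_eq_sum_zpow_of_memℓp_infty hκ
  let μ (m : Fin #s) : ℂ := s.equivFin.symm m
  refine ⟨#s, hcard.trans (by simpa using hrank), fun m => toIcoMod two_pi_pos 0 (μ m).arg,
    fun m => c (μ m), fun m => toIcoMod_mem_Ico' _ _, fun d => (hsum d).trans ?_⟩
  rw [← sum_coe_sort s, ← s.equivFin.symm.sum_comp]
  exact sum_congr rfl fun m _ => by
    rw [Complex.zpow_eq_exp_toIcoMod_arg (hnorm _ (s.equivFin.symm m).2)]
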